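/- (Post-processing bound at general order α: the quantized Gaussian mechanism is (α, α·C_q²/(2σ²))-RDP.) For every real α > 1 and all x, x' ∈ [−C_q/2, C_q/2], the Rényi divergence of order α between the quantized-Gaussian pmfs satisfies (1/(α−1))·log(∑_{r=0}^{k−1} P_x(r)^α · P_{x'}(r)^{1−α}) ≤ α·(x−x')²/(2σ²) ≤ α·C_q²/(2σ²). -/

import Mathlib

open MeasureTheory Real

/-- Density of the normal distribution `N(x, σ²)`. -/
noncomputable def gpdf (σ x t : ℝ) : ℝ :=
  (1 / (σ * Real.sqrt (2 * Real.pi))) * Real.exp (-(t - x) ^ 2 / (2 * σ ^ 2))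

/-- Quantization levels `B(r) = -C_q + r · δ`, with `δ = 2·C_q/(k-1)`. -/
noncomputable def Blev (Cq : ℝ) (k : ℕ) (r : ℕ) : ℝ :=
  -Cq + (r : ℝ) * (2 * Cq / ((k : ℝ) - 1))

/-- The quantized-Gaussian pmf `P_x(r)` on `{0, 1, …, k-1}`. -/
noncomputable def qgPmf (Cq σ : ℝ) (k : ℕ) (x : ℝ) (r : ℕ) : ℝ :=
  if r = 0 then
    (∫ t in Set.Iic (Blev Cq k 0), gpdf σ x t)
      + ∫ t in (Blev Cq k 0)..(Blev Cq k 1),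
          gpdf σ x t * (Blev Cq k 1 - t) / (2 * Cq / ((k : ℝ) - 1))
  else if r = k - 1 then
    (∫ t in (Blev Cq k (k - 2))..(Blev Cq k (k - 1)),
        gpdf σ x t * (t - Blev Cq k (k - 2)) / (2 * Cq / ((k : ℝ) - 1)))
      + ∫ t in Set.Ici (Blev Cq k (k - 1)), gpdf σ x t
  else
    (∫ t in (Blev Cq k (r - 1))..(Blev Cq k r),
        gpdf σ x t * (t - Blev Cq k (r - 1)) / (2 * Cq / ((k : ℝ) - 1)))
      + ∫ t in (Blev Cq k r)..(Blev Cq k (r + 1)),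
          gpdf σ x t * (Blev Cq k (r + 1) - t) / (2 * Cq / ((k : ℝ) - 1))

/-!
The quantizer is a post-processing of the Gaussian mechanism: `P_x(r) = ∫ W_r * f_x` for
continuous tent weights `W_r ≥ 0` with `∑ r, W_r = 1`. Since `(a, b) ↦ a ^ α * b ^ (1 - α)` is
convex and positively homogeneous, each bucket obeys
`P_x(r) ^ α * P_x'(r) ^ (1 - α) ≤ ∫ W_r * f_x ^ α * f_x' ^ (1 - α)`, and summing over `r` bounds
the Rényi moment by `∫ f_x ^ α * f_x' ^ (1 - α)`, which completing the square evaluates to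
`exp ((α - 1) * α * (x - x') ^ 2 / (2 * σ ^ 2))`.
-/

section Gaussian

variable {σ : ℝ}

lemma gpdf_pos (hσ : 0 < σ) (x t : ℝ) : 0 < gpdf σ x t := by
  have : 0 < Real.sqrt (2 * Real.pi) := Real.sqrt_pos.2 (by positivity)
  unfold gpdf
  positivity

lemma continuous_gpdf (σ x : ℝ) : Continuous (gpdf σ x) := by
  unfold gpdf
  fun_prop

lemma gpdf_eq_gaussianPDFReal (hσ : 0 < σ) (x : ℝ) :
    gpdf σ x = ProbabilityTheory.gaussianPDFReal x ⟨σ ^ 2, sq_nonneg σ⟩ := by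
  have hsqrt : Real.sqrt (2 * Real.pi * σ ^ 2) = σ * Real.sqrt (2 * Real.pi) := by
    rw [Real.sqrt_mul (by positivity), Real.sqrt_sq hσ.le, mul_comm]
  ext t
  change _ = (Real.sqrt (2 * Real.pi * σ ^ 2))⁻¹ * Real.exp (-(t - x) ^ 2 / (2 * σ ^ 2))
  rw [gpdf, hsqrt, one_div]

lemma integrable_gpdf (hσ : 0 < σ) (x : ℝ) : Integrable (gpdf σ x) := by
  rw [gpdf_eq_gaussianPDFReal hσ]
  exact ProbabilityTheory.integrable_gaussianPDFReal x _

lemma integral_gpdf (hσ : 0 < σ) (x : ℝ) : ∫ t, gpdf σ x t = 1 := by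
  rw [gpdf_eq_gaussianPDFReal hσ]
  exact ProbabilityTheory.integral_gaussianPDFReal_eq_one x
    fun h => (pow_pos hσ 2).ne' (congrArg Subtype.val h)

lemma gpdf_rpow_mul_rpow (hσ : 0 < σ) (α x x' t : ℝ) :
    gpdf σ x t ^ α * gpdf σ x' t ^ (1 - α)
      = Real.exp ((α - 1) * (α * (x - x') ^ 2 / (2 * σ ^ 2)))
        * gpdf σ (α * x + (1 - α) * x') t := by
  have hc : 0 < 1 / (σ * Real.sqrt (2 * Real.pi)) :=
    one_div_pos.2 (mul_pos hσ (Real.sqrt_pos.2 (by positivity)))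
  have hexp : -(t - x) ^ 2 / (2 * σ ^ 2) * α + -(t - x') ^ 2 / (2 * σ ^ 2) * (1 - α)
      = (α - 1) * (α * (x - x') ^ 2 / (2 * σ ^ 2))
        + -(t - (α * x + (1 - α) * x')) ^ 2 / (2 * σ ^ 2) := by
    field_simp
    ring
  unfold gpdf
  rw [Real.mul_rpow hc.le (Real.exp_pos _).le, Real.mul_rpow hc.le (Real.exp_pos _).le,
    ← Real.exp_mul, ← Real.exp_mul]
  calc _ = (1 / (σ * Real.sqrt (2 * Real.pi))) ^ (α + (1 - α))
        * Real.exp (-(t - x) ^ 2 / (2 * σ ^ 2) * α + -(t - x') ^ 2 / (2 * σ ^ 2) * (1 - α)) := by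
        rw [Real.rpow_add hc, Real.exp_add]; ring
    _ = _ := by rw [hexp, Real.exp_add, add_sub_cancel, Real.rpow_one]; ring

lemma integral_gpdf_rpow_mul_rpow (hσ : 0 < σ) (α x x' : ℝ) :
    ∫ t, gpdf σ x t ^ α * gpdf σ x' t ^ (1 - α)
      = Real.exp ((α - 1) * (α * (x - x') ^ 2 / (2 * σ ^ 2))) := by
  simp only [gpdf_rpow_mul_rpow hσ]
  rw [integral_const_mul, integral_gpdf hσ, mul_one]

lemma integrable_gpdf_rpow_mul_rpow (hσ : 0 < σ) (α x x' : ℝ) :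
    Integrable fun t => gpdf σ x t ^ α * gpdf σ x' t ^ (1 - α) := by
  simp only [gpdf_rpow_mul_rpow hσ]
  exact (integrable_gpdf hσ _).const_mul _

end Gaussian

noncomputable def ramp (a δ t : ℝ) : ℝ :=
  min 1 (max 0 ((t - a) / δ))

section Ramp

variable {a b c δ : ℝ} {f : ℝ → ℝ}

lemma ramp_nonneg (a δ t : ℝ) : 0 ≤ ramp a δ t :=
  le_min zero_le_one (le_max_left _ _)

lemma ramp_le_one (a δ t : ℝ) : ramp a δ t ≤ 1 :=
  min_le_left _ _

lemma continuous_ramp (a δ : ℝ) : Continuous (ramp a δ) := by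
  unfold ramp
  fun_prop

lemma ramp_le_ramp_of_le (hδ : 0 ≤ δ) (hab : a ≤ b) (t : ℝ) : ramp b δ t ≤ ramp a δ t := by
  unfold ramp
  gcongr

lemma ramp_mul_eq_indicator (hδ : 0 < δ) (hab : b = a + δ) (f : ℝ → ℝ) (t : ℝ) :
    ramp a δ t * f t
      = (Set.Ioc a b).indicator (fun t => f t * (t - a) / δ) t + (Set.Ioi b).indicator f t := by
  subst hab
  rcases le_or_gt t a with hta | hta
  · have : (t - a) / δ ≤ 0 := div_nonpos_of_nonpos_of_nonneg (by linarith) hδ.le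
    simp [ramp, hta, this, not_lt.2 (hta.trans (le_add_of_nonneg_right hδ.le))]
  rcases le_or_gt t (a + δ) with htb | htb
  · have h0 : 0 ≤ (t - a) / δ := div_nonneg (by linarith) hδ.le
    have h1 : (t - a) / δ ≤ 1 := (div_le_one hδ).2 (by linarith)
    simp only [ramp, h0, sup_of_le_right, h1, inf_of_le_right, Set.mem_Ioc, hta, htb, and_self,
      Set.indicator_of_mem, Set.mem_Ioi, not_lt.2 htb, not_false_eq_true,
      Set.indicator_of_notMem, add_zero]
    ring
  · have h1 : 1 ≤ (t - a) / δ := (one_le_div hδ).2 (by linarith)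
    simp [ramp, htb, not_le.2 htb, le_max_of_le_right h1]

lemma integrable_ramp_mul (hf : Integrable f) (a δ : ℝ) :
    Integrable fun t => ramp a δ t * f t :=
  hf.bdd_mul (continuous_ramp a δ).aestronglyMeasurable
    (.of_forall fun t => by
      rw [Real.norm_of_nonneg (ramp_nonneg a δ t)]
      exact ramp_le_one a δ t)

lemma integral_ramp_mul (hδ : 0 < δ) (hab : b = a + δ) (hf : Integrable f) (hfc : Continuous f) :
    ∫ t, ramp a δ t * f t = (∫ t in a..b, f t * (t - a) / δ) + ∫ t in Set.Ioi b, f t := by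
  have hslope : IntegrableOn (fun t => f t * (t - a) / δ) (Set.Ioc a b) :=
    (by fun_prop : Continuous fun t => f t * (t - a) / δ).integrableOn_Icc.mono_set
      Set.Ioc_subset_Icc_self
  simp_rw [ramp_mul_eq_indicator hδ hab f]
  rw [integral_add (hslope.integrable_indicator measurableSet_Ioc)
      (hf.integrableOn.integrable_indicator measurableSet_Ioi),
    integral_indicator measurableSet_Ioc, integral_indicator measurableSet_Ioi,
    intervalIntegral.integral_of_le (by linarith)]

lemma intervalIntegral_sub_slope (hδ : 0 < δ) (hab : b = a + δ) (hfc : Continuous f) :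
    (∫ t in a..b, f t) - ∫ t in a..b, f t * (t - a) / δ = ∫ t in a..b, f t * (b - t) / δ := by
  rw [← intervalIntegral.integral_sub (hfc.intervalIntegrable a b)
    ((by fun_prop : Continuous fun t => f t * (t - a) / δ).intervalIntegrable a b)]
  congr 1
  ext t
  subst hab
  field_simp
  ring

lemma integral_one_sub_ramp_mul (hδ : 0 < δ) (hab : b = a + δ) (hf : Integrable f)
    (hfc : Continuous f) :
    ∫ t, (1 - ramp a δ t) * f t
      = (∫ t in Set.Iic a, f t) + ∫ t in a..b, f t * (b - t) / δ := by
  have hsplit := intervalIntegral.integral_Iic_add_Ioi (b := a) hf.integrableOn hf.integrableOn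
  have htail := intervalIntegral.integral_Ioi_sub_Ioi (a := a) (b := b) hf.integrableOn
    (by linarith)
  simp_rw [sub_mul, one_mul]
  rw [integral_sub hf (integrable_ramp_mul hf a δ), integral_ramp_mul hδ hab hf hfc,
    ← intervalIntegral_sub_slope hδ hab hfc]
  linarith

lemma integral_ramp_sub_ramp_mul (hδ : 0 < δ) (hab : b = a + δ) (hbc : c = b + δ)
    (hf : Integrable f) (hfc : Continuous f) :
    ∫ t, (ramp a δ t - ramp b δ t) * f t
      = (∫ t in a..b, f t * (t - a) / δ) + ∫ t in b..c, f t * (c - t) / δ := by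
  have htail := intervalIntegral.integral_Ioi_sub_Ioi (a := b) (b := c) hf.integrableOn
    (by linarith)
  simp_rw [sub_mul]
  rw [integral_sub (integrable_ramp_mul hf a δ) (integrable_ramp_mul hf b δ),
    integral_ramp_mul hδ hab hf hfc, integral_ramp_mul hδ hbc hf hfc,
    ← intervalIntegral_sub_slope hδ hbc hfc]
  linarith

end Ramp

section Quantization

variable {Cq : ℝ} {k : ℕ}

lemma Blev_succ (Cq : ℝ) (k j : ℕ) :
    Blev Cq k (j + 1) = Blev Cq k j + 2 * Cq / ((k : ℝ) - 1) := by
  unfold Blev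
  push_cast
  ring

lemma quantStep_pos (hC : 0 < Cq) (hk : 2 ≤ k) : 0 < 2 * Cq / ((k : ℝ) - 1) := by
  have : (2 : ℝ) ≤ k := by exact_mod_cast hk
  exact div_pos (by positivity) (by linarith)

noncomputable def quantRamp (Cq : ℝ) (k j : ℕ) (t : ℝ) : ℝ :=
  if j = 0 then 1
  else if j < k then ramp (Blev Cq k (j - 1)) (2 * Cq / ((k : ℝ) - 1)) t
  else 0

/-- The hat function of bucket `r`, centred at `Blev Cq k r`, as a difference of consecutive ramps,
so that the weights telescope to `1`. -/
noncomputable def tentWeight (Cq : ℝ) (k r : ℕ) (t : ℝ) : ℝ :=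
  quantRamp Cq k r t - quantRamp Cq k (r + 1) t

lemma quantRamp_nonneg (Cq : ℝ) (k j : ℕ) (t : ℝ) : 0 ≤ quantRamp Cq k j t := by
  unfold quantRamp
  split_ifs
  exacts [zero_le_one, ramp_nonneg _ _ _, le_rfl]

lemma quantRamp_le_one (Cq : ℝ) (k j : ℕ) (t : ℝ) : quantRamp Cq k j t ≤ 1 := by
  unfold quantRamp
  split_ifs
  exacts [le_rfl, ramp_le_one _ _ _, zero_le_one]

lemma quantRamp_succ_le (hC : 0 < Cq) (hk : 2 ≤ k) (j : ℕ) (t : ℝ) :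
    quantRamp Cq k (j + 1) t ≤ quantRamp Cq k j t := by
  rcases Nat.eq_zero_or_pos j with rfl | hj
  · simpa [quantRamp] using quantRamp_le_one Cq k 1 t
  by_cases hjk : j + 1 < k
  · have hB : Blev Cq k (j - 1) ≤ Blev Cq k j := by
      rw [show j = j - 1 + 1 by omega, Blev_succ, Nat.add_sub_cancel]
      linarith [quantStep_pos hC hk]
    simpa [quantRamp, hj.ne', hjk, show j < k by omega]
      using ramp_le_ramp_of_le (quantStep_pos hC hk).le hB t
  · simpa [quantRamp, hjk] using quantRamp_nonneg Cq k j t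

lemma tentWeight_nonneg (hC : 0 < Cq) (hk : 2 ≤ k) (r : ℕ) (t : ℝ) : 0 ≤ tentWeight Cq k r t :=
  sub_nonneg.2 (quantRamp_succ_le hC hk r t)

lemma sum_tentWeight (Cq : ℝ) (hk : 1 ≤ k) (t : ℝ) :
    ∑ r ∈ Finset.range k, tentWeight Cq k r t = 1 := by
  unfold tentWeight
  rw [Finset.sum_range_sub' (fun j => quantRamp Cq k j t)]
  simp [quantRamp, show k ≠ 0 by omega]

lemma continuous_tentWeight (Cq : ℝ) (k r : ℕ) : Continuous (tentWeight Cq k r) := by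
  have (j : ℕ) : Continuous (quantRamp Cq k j) := by
    unfold quantRamp
    split_ifs
    exacts [continuous_const, continuous_ramp _ _, continuous_const]
  exact (this r).sub (this (r + 1))

end Quantization

lemma qgPmf_eq_integral_tentWeight {Cq σ : ℝ} (hC : 0 < Cq) (hσ : 0 < σ) {k : ℕ} (hk : 2 ≤ k)
    (x : ℝ) {r : ℕ} (hr : r < k) :
    qgPmf Cq σ k x r = ∫ t, tentWeight Cq k r t * gpdf σ x t := by
  have hδ := quantStep_pos hC hk
  have hf := integrable_gpdf hσ x
  have hfc := continuous_gpdf σ x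
  rcases Nat.eq_zero_or_pos r with rfl | hr0
  · have hW (t : ℝ) : tentWeight Cq k 0 t = 1 - ramp (Blev Cq k 0) (2 * Cq / ((k : ℝ) - 1)) t := by
      simp [tentWeight, quantRamp, show 1 < k by omega]
    simp only [hW, qgPmf, if_true]
    exact (integral_one_sub_ramp_mul hδ (Blev_succ Cq k 0) hf hfc).symm
  by_cases hrk : r = k - 1
  · subst hrk
    have hW (t : ℝ) :
        tentWeight Cq k (k - 1) t = ramp (Blev Cq k (k - 2)) (2 * Cq / ((k : ℝ) - 1)) t := by
      simp [tentWeight, quantRamp, hr0.ne', hr, show k ≠ 0 by omega,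
        show k - 1 - 1 = k - 2 by omega, show k - 1 + 1 = k by omega]
    have hB : Blev Cq k (k - 1) = Blev Cq k (k - 2) + 2 * Cq / ((k : ℝ) - 1) := by
      rw [← Blev_succ, show k - 2 + 1 = k - 1 by omega]
    simp only [hW, qgPmf, if_neg hr0.ne', if_true, integral_Ici_eq_integral_Ioi]
    exact (integral_ramp_mul hδ hB hf hfc).symm
  · have hW (t : ℝ) : tentWeight Cq k r t
        = ramp (Blev Cq k (r - 1)) (2 * Cq / ((k : ℝ) - 1)) t
          - ramp (Blev Cq k r) (2 * Cq / ((k : ℝ) - 1)) t := by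
      simp [tentWeight, quantRamp, hr0.ne', hr, show r + 1 < k by omega]
    have hB : Blev Cq k r = Blev Cq k (r - 1) + 2 * Cq / ((k : ℝ) - 1) := by
      rw [← Blev_succ, Nat.sub_add_cancel hr0]
    simp only [hW, qgPmf, if_neg hr0.ne', if_neg hrk]
    exact (integral_ramp_sub_ramp_mul hδ hB (Blev_succ Cq k r) hf hfc).symm

lemma qgPmf_nonneg {Cq σ : ℝ} (hC : 0 < Cq) (hσ : 0 < σ) {k : ℕ} (hk : 2 ≤ k) (x : ℝ) {r : ℕ}
    (hr : r < k) : 0 ≤ qgPmf Cq σ k x r := by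
  rw [qgPmf_eq_integral_tentWeight hC hσ hk x hr]
  exact integral_nonneg fun t => mul_nonneg (tentWeight_nonneg hC hk r t) (gpdf_pos hσ x t).le

lemma tangent_le_rpow_mul_rpow {α θ a b : ℝ} (hα : 1 ≤ α) (hθ : 0 < θ) (ha : 0 ≤ a)
    (hb : 0 < b) :
    α * θ ^ (α - 1) * a + (1 - α) * θ ^ α * b ≤ a ^ α * b ^ (1 - α) := by
  have hs : 0 ≤ a / (b * θ) := by positivity
  have hbernoulli := one_add_mul_self_le_rpow_one_add (s := a / (b * θ) - 1) (by linarith) hα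
  rw [add_sub_cancel] at hbernoulli
  have hθα : 0 < θ ^ α := Real.rpow_pos_of_pos hθ α
  calc α * θ ^ (α - 1) * a + (1 - α) * θ ^ α * b
      = b * θ ^ α * (1 + α * (a / (b * θ) - 1)) := by
        rw [Real.rpow_sub_one hθ.ne']
        field_simp
        ring
    _ ≤ b * θ ^ α * (a / (b * θ)) ^ α := by gcongr
    _ = a ^ α * b ^ (1 - α) := by
        rw [Real.div_rpow ha (by positivity), Real.mul_rpow hb.le hθ.le, Real.rpow_sub hb,
          Real.rpow_one]
        field_simp

section Holder

variable {Ω : Type*} [MeasurableSpace Ω] {μ : Measure Ω} {α : ℝ} {p q : Ω → ℝ}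

/-- Integrating the supporting hyperplane of `(a, b) ↦ a ^ α * b ^ (1 - α)` at the point
`(∫ w p, ∫ w q)`. -/
lemma integral_rpow_mul_integral_rpow_le {w : Ω → ℝ} (hα : 1 < α) (hw : ∀ t, 0 ≤ w t)
    (hp : ∀ t, 0 < p t) (hq : ∀ t, 0 < q t) (hwp : Integrable (fun t => w t * p t) μ)
    (hwq : Integrable (fun t => w t * q t) μ)
    (hwpq : Integrable (fun t => w t * (p t ^ α * q t ^ (1 - α))) μ) :
    (∫ t, w t * p t ∂μ) ^ α * (∫ t, w t * q t ∂μ) ^ (1 - α)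
      ≤ ∫ t, w t * (p t ^ α * q t ^ (1 - α)) ∂μ := by
  set A := ∫ t, w t * p t ∂μ
  set B := ∫ t, w t * q t ∂μ
  have hRHS : 0 ≤ ∫ t, w t * (p t ^ α * q t ^ (1 - α)) ∂μ :=
    integral_nonneg fun t => mul_nonneg (hw t) (by have := hp t; have := hq t; positivity)
  have hA : 0 ≤ A := integral_nonneg fun t => mul_nonneg (hw t) (hp t).le
  have hB : 0 ≤ B := integral_nonneg fun t => mul_nonneg (hw t) (hq t).le
  rcases hA.eq_or_lt with hA0 | hApos
  · rwa [← hA0, Real.zero_rpow (by linarith), zero_mul]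
  rcases hB.eq_or_lt with hB0 | hBpos
  · rwa [← hB0, Real.zero_rpow (by linarith), mul_zero]
  set θ := A / B
  have hθ : 0 < θ := div_pos hApos hBpos
  have htangent : ∀ t, α * θ ^ (α - 1) * (w t * p t) + (1 - α) * θ ^ α * (w t * q t)
      ≤ w t * (p t ^ α * q t ^ (1 - α)) := fun t => by
    have := mul_le_mul_of_nonneg_left
      (tangent_le_rpow_mul_rpow hα.le hθ (hp t).le (hq t)) (hw t)
    linarith
  have hAθ : θ ^ (α - 1) * A = A ^ α * B ^ (1 - α) := by
    rw [Real.rpow_sub_one hθ.ne', show θ = A / B from rfl, Real.div_rpow hA hB,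
      Real.rpow_sub hBpos, Real.rpow_one]
    field_simp
  have hBθ : θ ^ α * B = A ^ α * B ^ (1 - α) := by
    rw [Real.div_rpow hA hB, Real.rpow_sub hBpos, Real.rpow_one]
    field_simp
  calc A ^ α * B ^ (1 - α) = α * θ ^ (α - 1) * A + (1 - α) * θ ^ α * B := by
        rw [mul_assoc, mul_assoc, hAθ, hBθ]; ring
    _ = ∫ t, (α * θ ^ (α - 1) * (w t * p t) + (1 - α) * θ ^ α * (w t * q t)) ∂μ := by
        rw [integral_add (hwp.const_mul _) (hwq.const_mul _), integral_const_mul,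
          integral_const_mul]
    _ ≤ _ := integral_mono ((hwp.const_mul _).add (hwq.const_mul _)) hwpq htangent

theorem sum_integral_rpow_mul_integral_rpow_le {ι : Type*} (s : Finset ι) (W : ι → Ω → ℝ)
    (hW : ∀ i t, 0 ≤ W i t) (hWsum : ∀ t, ∑ i ∈ s, W i t = 1)
    (hWm : ∀ i, AEStronglyMeasurable (W i) μ) (hα : 1 < α) (hp : ∀ t, 0 < p t)
    (hq : ∀ t, 0 < q t) (hpi : Integrable p μ) (hqi : Integrable q μ)
    (hpqi : Integrable (fun t => p t ^ α * q t ^ (1 - α)) μ) :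
    ∑ i ∈ s, (∫ t, W i t * p t ∂μ) ^ α * (∫ t, W i t * q t ∂μ) ^ (1 - α)
      ≤ ∫ t, p t ^ α * q t ^ (1 - α) ∂μ := by
  have hWint {g : Ω → ℝ} (hg : Integrable g μ) {i : ι} (hi : i ∈ s) :
      Integrable (fun t => W i t * g t) μ :=
    hg.bdd_mul (c := 1) (hWm i) (.of_forall fun t => by
      rw [Real.norm_of_nonneg (hW i t), ← hWsum t]
      exact Finset.single_le_sum (fun j _ => hW j t) hi)
  calc ∑ i ∈ s, (∫ t, W i t * p t ∂μ) ^ α * (∫ t, W i t * q t ∂μ) ^ (1 - α)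
      ≤ ∑ i ∈ s, ∫ t, W i t * (p t ^ α * q t ^ (1 - α)) ∂μ :=
        Finset.sum_le_sum fun i hi => integral_rpow_mul_integral_rpow_le hα (hW i) hp hq
          (hWint hpi hi) (hWint hqi hi) (hWint hpqi hi)
    _ = ∫ t, p t ^ α * q t ^ (1 - α) ∂μ := by
        rw [← integral_finsetSum _ fun i hi => hWint hpqi hi]
        simp_rw [← Finset.sum_mul, hWsum, one_mul]

end Holder

lemma one_div_mul_log_le_of_le_exp {c D S : ℝ} (hc : 0 < c) (hD : 0 ≤ D) (hS : 0 ≤ S)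
    (hSD : S ≤ Real.exp (c * D)) : 1 / c * Real.log S ≤ D := by
  rcases hS.eq_or_lt with rfl | hSpos
  · simpa using hD
  have := (Real.log_le_iff_le_exp hSpos).2 hSD
  rw [one_div_mul_eq_div, div_le_iff₀ hc]
  linarith

/-- Post-processing bound at general order `α > 1`: the quantized Gaussian mechanism is
`(α, α·C_q²/(2σ²))`-RDP. -/
theorem quantGauss_renyi_le_gaussian_budget (Cq σ : ℝ) (hC : 0 < Cq) (hσ : 0 < σ)
    (k : ℕ) (hk : 2 ≤ k) (α : ℝ) (hα : 1 < α) (x x' : ℝ)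
    (hx : x ∈ Set.Icc (-(Cq / 2)) (Cq / 2)) (hx' : x' ∈ Set.Icc (-(Cq / 2)) (Cq / 2)) :
    (1 / (α - 1)) * Real.log (∑ r ∈ Finset.range k,
        qgPmf Cq σ k x r ^ α * qgPmf Cq σ k x' r ^ (1 - α))
      ≤ α * (x - x') ^ 2 / (2 * σ ^ 2)
    ∧ α * (x - x') ^ 2 / (2 * σ ^ 2) ≤ α * Cq ^ 2 / (2 * σ ^ 2) := by
  have hrepr : ∑ r ∈ Finset.range k, qgPmf Cq σ k x r ^ α * qgPmf Cq σ k x' r ^ (1 - α)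
      = ∑ r ∈ Finset.range k, (∫ t, tentWeight Cq k r t * gpdf σ x t) ^ α
          * (∫ t, tentWeight Cq k r t * gpdf σ x' t) ^ (1 - α) :=
    Finset.sum_congr rfl fun r hr => by
      rw [qgPmf_eq_integral_tentWeight hC hσ hk x (Finset.mem_range.1 hr),
        qgPmf_eq_integral_tentWeight hC hσ hk x' (Finset.mem_range.1 hr)]
  have hmoment : ∑ r ∈ Finset.range k, qgPmf Cq σ k x r ^ α * qgPmf Cq σ k x' r ^ (1 - α)
      ≤ Real.exp ((α - 1) * (α * (x - x') ^ 2 / (2 * σ ^ 2))) := by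
    rw [hrepr, ← integral_gpdf_rpow_mul_rpow hσ]
    exact sum_integral_rpow_mul_integral_rpow_le (Finset.range k) (tentWeight Cq k)
      (tentWeight_nonneg hC hk) (sum_tentWeight Cq (by omega))
      (fun r => (continuous_tentWeight Cq k r).aestronglyMeasurable) hα (gpdf_pos hσ x)
      (gpdf_pos hσ x') (integrable_gpdf hσ x) (integrable_gpdf hσ x')
      (integrable_gpdf_rpow_mul_rpow hσ α x x')
  have hnonneg : 0 ≤ ∑ r ∈ Finset.range k, qgPmf Cq σ k x r ^ α * qgPmf Cq σ k x' r ^ (1 - α) :=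
    Finset.sum_nonneg fun r hr => mul_nonneg
      (Real.rpow_nonneg (qgPmf_nonneg hC hσ hk x (Finset.mem_range.1 hr)) _)
      (Real.rpow_nonneg (qgPmf_nonneg hC hσ hk x' (Finset.mem_range.1 hr)) _)
  have hsq : (x - x') ^ 2 ≤ Cq ^ 2 :=
    sq_le_sq' (by linarith [hx.1, hx'.2]) (by linarith [hx.2, hx'.1])
  exact ⟨one_div_mul_log_le_of_le_exp (by linarith) (by positivity) hnonneg hmoment,
    by gcongr⟩
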